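/- Let L be a shift space such that the set of factors of L is prolongable (every factor extends to the left and right by letters within Fact_L). Let a be a letter and u a factor of L that is not left special (u has a unique left letter extension in Fact_L). Then for any w, w' ∈ Cyl_L(au) with w < w', the shift map satisfies σ([w, w']) = [σ(w), σ(w')]. -/

import Mathlib

open MeasureTheory Topology Filter Set

/-- The shift map on one-sided infinite words, erasing the first letter. -/
def shiftMap {A : Type*} (w : ℕ → A) : ℕ → A := fun n => w (n + 1)

/-- A shift space: a closed, shift-invariant subset of `A^ℕ`. -/
def IsShiftSpace {A : Type*} [TopologicalSpace A] (L : Set (ℕ → A)) : Prop :=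
  IsClosed L ∧ ∀ w ∈ L, shiftMap w ∈ L

/-- The finite word `v` occurs in `w` at position `j`. -/
def OccursAt {A : Type*} (w : ℕ → A) (j : ℕ) (v : List A) : Prop :=
  ∀ i : Fin v.length, w (j + i) = v.get i

/-- `v` is a factor (subblock) of the language of `L`. -/
def IsFactor {A : Type*} (L : Set (ℕ → A)) (v : List A) : Prop :=
  ∃ w ∈ L, ∃ j, OccursAt w j v

/-- The cylinder of `v` in `L`: words of `L` having `v` as a prefix. -/
def Cyl {A : Type*} (L : Set (ℕ → A)) (v : List A) : Set (ℕ → A) :=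
  {w ∈ L | OccursAt w 0 v}

/-- Strict lexicographic order on infinite words. -/
def LexLt {A : Type*} [LinearOrder A] (w w' : ℕ → A) : Prop :=
  ∃ n, (∀ i < n, w i = w' i) ∧ w n < w' n

/-- Lexicographic order (non-strict) on infinite words. -/
def LexLe {A : Type*} [LinearOrder A] (w w' : ℕ → A) : Prop := LexLt w w' ∨ w = w'

/-- The word interval `[w, w']` in `L` for the lexicographic order. -/
def wordInterval {A : Type*} [LinearOrder A] (L : Set (ℕ → A)) (w w' : ℕ → A) :
    Set (ℕ → A) := {z ∈ L | LexLe w z ∧ LexLe z w'}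

/-- The length-`n` prefix of an infinite word, as a list. -/
def prefixWord {A : Type*} (w : ℕ → A) (n : ℕ) : List A := List.ofFn (fun i : Fin n => w i)

/-- A factor is left special if it has at least two distinct left one-letter extensions. -/
def IsLeftSpecial {A : Type*} (L : Set (ℕ → A)) (v : List A) : Prop :=
  ∃ a b : A, a ≠ b ∧ IsFactor L (a :: v) ∧ IsFactor L (b :: v)

/-- A factor is right special if it has at least two distinct right one-letter extensions. -/
def IsRightSpecial {A : Type*} (L : Set (ℕ → A)) (v : List A) : Prop :=
  ∃ a b : A, a ≠ b ∧ IsFactor L (v ++ [a]) ∧ IsFactor L (v ++ [b])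

/-- The set of infinite left special words: all prefixes are left special factors. -/
def SPset {A : Type*} (L : Set (ℕ → A)) : Set (ℕ → A) :=
  {w | ∀ n : ℕ, IsLeftSpecial L (prefixWord w n)}

/-- The factor complexity `p_L(n)`: the number of distinct length-`n` factors of `L`. -/
noncomputable def complexity {A : Type*} (L : Set (ℕ → A)) (n : ℕ) : ℕ :=
  Nat.card {v : List A // v.length = n ∧ IsFactor L v}

/-- The number of left special factors of length `n`. -/
noncomputable def splCount {A : Type*} (L : Set (ℕ → A)) (n : ℕ) : ℕ :=
  Nat.card {v : List A // v.length = n ∧ IsFactor L v ∧ IsLeftSpecial L v}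

/-- A minimal shift: a nonempty shift space with no nonempty proper subshift. -/
def IsMinimalShift {A : Type*} [TopologicalSpace A] (L : Set (ℕ → A)) : Prop :=
  IsShiftSpace L ∧ L.Nonempty ∧
    ∀ L' ⊆ L, IsShiftSpace L' → L'.Nonempty → L' = L

/-- Aperiodicity: no periodic word in `L`. -/
def IsAperiodic {A : Type*} (L : Set (ℕ → A)) : Prop :=
  ∀ w ∈ L, ∀ k : ℕ, 0 < k → shiftMap^[k] w ≠ w

/-- The factor set of `L` is prolongable: every factor extends by a letter on both sides. -/
def Prolongable {A : Type*} (L : Set (ℕ → A)) : Prop :=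
  ∀ v : List A, IsFactor L v →
    (∃ a : A, IsFactor L (a :: v)) ∧ (∃ b : A, IsFactor L (v ++ [b]))

/-!
Words of `[w, w']` share the common prefix `au` of `w` and `w'`, and on words with the same first
letter the shift both preserves and reflects the lexicographic order; this gives `⊆`. Conversely,
a word `y ∈ [σw, σw']` starts with `u`. Every long prefix `v` of `y` has a left extension `bv` in
the language (prolongability), and `bu` is then a factor, so `b = a`. Hence every prefix of `ay`
is a factor, so `ay ∈ L` because `L` is closed, and `ay ∈ [w, w']`.
-/

section Words

variable {A : Type*}

lemma shiftMap_iterate_apply (k : ℕ) (w : ℕ → A) (n : ℕ) : shiftMap^[k] w n = w (n + k) := by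
  induction k generalizing w with
  | zero => rfl
  | succ k ih => rw [Function.iterate_succ_apply, ih]; rfl

lemma IsShiftSpace.iterate_mem [TopologicalSpace A] {L : Set (ℕ → A)} (hL : IsShiftSpace L)
    (k : ℕ) {w : ℕ → A} (hw : w ∈ L) : shiftMap^[k] w ∈ L := by
  induction k with
  | zero => exact hw
  | succ k ih => rw [Function.iterate_succ_apply']; exact hL.2 _ ih

def consWord (a : A) (y : ℕ → A) : ℕ → A
  | 0 => a
  | n + 1 => y n

lemma shiftMap_inj_iff {w z : ℕ → A} (h0 : w 0 = z 0) : shiftMap w = shiftMap z ↔ w = z := by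
  refine ⟨fun h => funext fun i => ?_, congrArg shiftMap⟩
  cases i with
  | zero => exact h0
  | succ i => exact congrFun h i

lemma prefixWord_succ (w : ℕ → A) (n : ℕ) :
    prefixWord w (n + 1) = w 0 :: prefixWord (shiftMap w) n :=
  List.ofFn_succ

lemma prefixWord_isPrefix_prefixWord (w : ℕ → A) {m n : ℕ} (h : m ≤ n) :
    prefixWord w m <+: prefixWord w n := by
  obtain ⟨k, rfl⟩ := Nat.exists_eq_add_of_le h
  exact ⟨_, (List.ofFn_add (f := fun i : Fin (m + k) => w i)).symm⟩

lemma occursAt_zero_iff {w : ℕ → A} {v : List A} :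
    OccursAt w 0 v ↔ prefixWord w v.length = v := by
  simp [OccursAt, prefixWord, List.ext_get_iff, Fin.forall_iff]

lemma occursAt_zero_cons_iff {w : ℕ → A} {b : A} {v : List A} :
    OccursAt w 0 (b :: v) ↔ w 0 = b ∧ OccursAt (shiftMap w) 0 v := by
  simp only [occursAt_zero_iff, List.length_cons, prefixWord_succ, List.cons.injEq]

lemma OccursAt.of_isPrefix {w : ℕ → A} {j : ℕ} {l v : List A} (h : OccursAt w j v)
    (hl : l <+: v) : OccursAt w j l := by
  obtain ⟨t, rfl⟩ := hl
  intro i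
  simpa [List.getElem_append_left] using h ⟨i, by simp; omega⟩

lemma IsFactor.of_isPrefix {L : Set (ℕ → A)} {l v : List A} (h : IsFactor L v) (hl : l <+: v) :
    IsFactor L l :=
  let ⟨w, hw, j, hocc⟩ := h
  ⟨w, hw, j, hocc.of_isPrefix hl⟩

lemma isFactor_prefixWord {L : Set (ℕ → A)} {w : ℕ → A} (hw : w ∈ L) (n : ℕ) :
    IsFactor L (prefixWord w n) :=
  ⟨w, hw, 0, occursAt_zero_iff.2 (by simp [prefixWord])⟩

end Words

section Closure

variable {A : Type*} [TopologicalSpace A] [DiscreteTopology A] {L : Set (ℕ → A)}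

lemma IsShiftSpace.mem_of_forall_isFactor_prefixWord (hL : IsShiftSpace L) {z : ℕ → A}
    (h : ∀ n, IsFactor L (prefixWord z n)) : z ∈ L := by
  by_contra hz
  obtain ⟨n, hn⟩ := PiNat.exists_disjoint_cylinder hL.1 hz
  obtain ⟨x, hx, j, hocc⟩ := h n
  refine Set.disjoint_left.1 hn (hL.iterate_mem j hx) fun i hi => ?_
  simpa [shiftMap_iterate_apply, prefixWord, add_comm] using hocc ⟨i, by simpa [prefixWord]⟩

theorem IsShiftSpace.consWord_mem (hL : IsShiftSpace L)
    (hprol : ∀ v, IsFactor L v → ∃ b, IsFactor L (b :: v)) {a : A} {u : List A}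
    (huniq : ∀ b, IsFactor L (b :: u) → b = a) {y : ℕ → A} (hy : y ∈ L)
    (hyu : OccursAt y 0 u) : consWord a y ∈ L := by
  refine hL.mem_of_forall_isFactor_prefixWord fun n => ?_
  obtain ⟨b, hb⟩ := hprol _ (isFactor_prefixWord hy (n + u.length))
  have hu : u <+: prefixWord y (n + u.length) := by
    simpa [occursAt_zero_iff.1 hyu] using
      prefixWord_isPrefix_prefixWord y (m := u.length) (n := n + u.length) (by omega)
  obtain rfl : b = a := huniq b (hb.of_isPrefix (List.cons_prefix_cons.2 ⟨rfl, hu⟩))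
  have hpre := prefixWord_isPrefix_prefixWord (consWord b y) (Nat.le_add_right n (u.length + 1))
  rw [← add_assoc, prefixWord_succ] at hpre
  exact hb.of_isPrefix hpre

end Closure

section Lex

variable {A : Type*} [LinearOrder A] {w w' z : ℕ → A}

lemma lexLe_iff_toLex_le : LexLe w w' ↔ toLex w ≤ toLex w' := by
  rw [le_iff_lt_or_eq, toLex_inj]
  rfl

lemma LexLt.not_lexLe (h : LexLt w w') : ¬LexLe w' w := by
  rw [lexLe_iff_toLex_le, not_le]
  exact h

lemma OccursAt.of_lexLe_of_lexLe {v : List A} (hw : OccursAt w 0 v) (hw' : OccursAt w' 0 v)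
    (hwz : LexLe w z) (hzw' : LexLe z w') : OccursAt z 0 v := by
  rcases hwz with ⟨n, hwz, hlt⟩ | rfl
  · have hww' : ∀ i < v.length, w i = w' i := fun i hi => by
      simpa using (hw ⟨i, hi⟩).trans (hw' ⟨i, hi⟩).symm
    by_cases hn : v.length ≤ n
    · intro i
      simpa [← hwz i (by omega)] using hw i
    · refine absurd hzw' (LexLt.not_lexLe ⟨n, fun i hi => ?_, ?_⟩)
      · rw [← hww' i (by omega), hwz i hi]
      · rwa [← hww' n (by omega)]
  · exact hw

lemma lexLt_shiftMap_iff (h0 : w 0 = z 0) :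
    LexLt (shiftMap w) (shiftMap z) ↔ LexLt w z := by
  constructor
  · rintro ⟨n, hn, hlt⟩
    refine ⟨n + 1, fun i hi => ?_, hlt⟩
    cases i with
    | zero => exact h0
    | succ i => exact hn i (by omega)
  · rintro ⟨_ | n, hn, hlt⟩
    · exact absurd hlt (h0 ▸ lt_irrefl _)
    · exact ⟨n, fun i hi => hn (i + 1) (by omega), hlt⟩

lemma lexLe_shiftMap_iff (h0 : w 0 = z 0) :
    LexLe (shiftMap w) (shiftMap z) ↔ LexLe w z :=
  or_congr (lexLt_shiftMap_iff h0) (shiftMap_inj_iff h0)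

end Lex

theorem shift_image_of_word_interval_general
    {A : Type*} [TopologicalSpace A] [DiscreteTopology A] [LinearOrder A]
    (L : Set (ℕ → A)) (hL : IsShiftSpace L) (hprol : Prolongable L)
    (a : A) (u : List A)
    (hnls : ∀ b c : A, IsFactor L (b :: u) → IsFactor L (c :: u) → b = c)
    (w w' : ℕ → A) (hw : w ∈ Cyl L (a :: u)) (hw' : w' ∈ Cyl L (a :: u)) :
    shiftMap '' (wordInterval L w w') = wordInterval L (shiftMap w) (shiftMap w') := by
  obtain ⟨hw0, hwu⟩ := occursAt_zero_cons_iff.1 hw.2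
  obtain ⟨hw'0, hw'u⟩ := occursAt_zero_cons_iff.1 hw'.2
  ext y
  constructor
  · rintro ⟨z, ⟨hzL, hwz, hzw'⟩, rfl⟩
    have hz0 : z 0 = a := (occursAt_zero_cons_iff.1 (hw.2.of_lexLe_of_lexLe hw'.2 hwz hzw')).1
    exact ⟨hL.2 z hzL, (lexLe_shiftMap_iff (hw0.trans hz0.symm)).2 hwz,
      (lexLe_shiftMap_iff (hz0.trans hw'0.symm)).2 hzw'⟩
  · rintro ⟨hyL, hwy, hyw'⟩
    have huniq (b : A) (hb : IsFactor L (b :: u)) : b = a := hnls b a hb ⟨w, hw.1, 0, hw.2⟩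
    refine ⟨consWord a y, ⟨hL.consWord_mem (fun v hv => (hprol v hv).1) huniq hyL
      (hwu.of_lexLe_of_lexLe hw'u hwy hyw'), ?_, ?_⟩, rfl⟩
    · exact (lexLe_shiftMap_iff hw0).1 hwy
    · exact (lexLe_shiftMap_iff hw'0.symm).1 hyw'

/-- If `Fact_L` is prolongable and `u` is a factor that is not left special,
then for `w < w'` in `Cyl_L(au)`, `σ([w,w']) = [σ(w), σ(w')]`. -/
theorem shift_image_of_word_interval
    {A : Type*} [Fintype A] [TopologicalSpace A] [DiscreteTopology A] [LinearOrder A]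
    (L : Set (ℕ → A)) (hL : IsShiftSpace L) (hprol : Prolongable L)
    (a : A) (u : List A) (hu : IsFactor L u)
    (hnls : ∀ b c : A, IsFactor L (b :: u) → IsFactor L (c :: u) → b = c)
    (w w' : ℕ → A) (hw : w ∈ Cyl L (a :: u)) (hw' : w' ∈ Cyl L (a :: u))
    (hlt : LexLt w w') :
    shiftMap '' (wordInterval L w w') = wordInterval L (shiftMap w) (shiftMap w') :=
  shift_image_of_word_interval_general L hL hprol a u hnls w w' hw hw'
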